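/- arXiv:1505.04307 — 5 statements merged into one kernel-verified Lean document; each statement's English description precedes it below -/
import Mathlib

section
/- Let G = (I ∪ J, E) be a bipartite graph between finite index sets I and J that is a tree. For any vectors α ∈ ℝ^I and β ∈ ℝ^J with ∑_{i∈I} α_i = ∑_{j∈J} β_j, there exists a unique matrix ψ ∈ ℝ^{I×J} such that ∑_{j} ψ_{ij} = α_i for all i ∈ I, ∑_{i} ψ_{ij} = β_j for all j ∈ J, and ψ_{ij} = 0 whenever (i,j) ∉ E. -/
open Finset

/-- The bipartite graph on `I ⊕ J` determined by the edge set `E ⊆ I × J`. -/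
def bipGraph {I J : Type*} (E : Set (I × J)) : SimpleGraph (I ⊕ J) :=
  SimpleGraph.fromRel (fun a b => ∃ p ∈ E, a = Sum.inl p.1 ∧ b = Sum.inr p.2)

section Aux

open scoped Classical

variable {I J : Type*} [Fintype I] [Fintype J] (E : Set (I × J))

/-- The boundary vector of an edge. -/
noncomputable def wvec (p : I × J) : (I → ℝ) × (J → ℝ) :=
  (fun i => if p.1 = i then 1 else 0, fun j => if p.2 = j then 1 else 0)

/-- Signed vertex potentials. -/
noncomputable def phiV : I ⊕ J → (I → ℝ) × (J → ℝ)
  | Sum.inl i => (fun i' => if i = i' then 1 else 0, 0)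
  | Sum.inr j => (0, fun j' => if j = j' then -1 else 0)

variable [Fintype ↥E]

/-- The boundary map sending an edge weighting to its (row sums, column sums). -/
noncomputable def Lmap : (↥E → ℝ) →ₗ[ℝ] (I → ℝ) × (J → ℝ) where
  toFun f := ∑ e : ↥E, f e • wvec (e : I × J)
  map_add' f g := by simp [add_smul, Finset.sum_add_distrib]
  map_smul' c f := by simp [Finset.smul_sum, smul_smul]

lemma phi_sub_mem_span {u v : I ⊕ J} (h : (bipGraph E).Reachable u v) :
    phiV u - phiV v ∈ Submodule.span ℝ (wvec '' E) := by
  obtain ⟨w⟩ := h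
  induction w with
  | nil => simp
  | @cons u x v hadj p ih =>
    have hx : phiV u - phiV x ∈ Submodule.span ℝ (wvec '' E) := by
      rw [bipGraph, SimpleGraph.fromRel_adj] at hadj
      obtain ⟨hne, ⟨q, hq, rfl, rfl⟩ | ⟨q, hq, rfl, rfl⟩⟩ := hadj
      · have hw : phiV (Sum.inl q.1) - phiV (Sum.inr q.2) = wvec (I := I) (J := J) q := by
          refine Prod.ext ?_ ?_ <;> funext z <;> simp [phiV, wvec] <;> split <;> norm_num
        rw [hw]
        exact Submodule.subset_span ⟨q, hq, rfl⟩
      · have hw : phiV (Sum.inr q.2) - phiV (Sum.inl q.1) = -wvec (I := I) (J := J) q := by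
          refine Prod.ext ?_ ?_ <;> funext z <;> simp [phiV, wvec] <;> split <;> norm_num
        rw [hw]
        exact neg_mem (Submodule.subset_span ⟨q, hq, rfl⟩)
    have := add_mem hx ih
    simpa [sub_add_sub_cancel] using this
lemma mem_span_of (htree : (bipGraph E).IsTree) (α : I → ℝ) (β : J → ℝ)
    (hs : ∑ i, α i = ∑ j, β j) :
    ((α, β) : (I → ℝ) × (J → ℝ)) ∈ Submodule.span ℝ (wvec '' E) := by
  have hconn := htree.isConnected
  obtain ⟨v₀⟩ := hconn.nonempty
  have h1 : ∑ i, α i • phiV (I := I) (J := J) (Sum.inl i) = (α, 0) := by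
    refine Prod.ext ?_ ?_
    · simp only [Prod.fst_sum, Prod.smul_fst]
      funext i'
      simp [phiV, Finset.sum_apply, smul_eq_mul, mul_ite, Finset.sum_ite_eq]
    · simp [phiV, Prod.snd_sum]
  have h2 : ∑ j, β j • phiV (I := I) (J := J) (Sum.inr j) = (0, -β) := by
    refine Prod.ext ?_ ?_
    · simp [phiV, Prod.fst_sum]
    · simp only [Prod.snd_sum, Prod.smul_snd]
      funext j'
      simp [phiV, Finset.sum_apply, smul_eq_mul, mul_ite, Finset.sum_ite_eq]
  have key : ((α, β) : (I → ℝ) × (J → ℝ)) =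
      (∑ i, α i • (phiV (Sum.inl i) - phiV v₀)) -
        ∑ j, β j • (phiV (Sum.inr j) - phiV v₀) := by
    simp only [smul_sub, Finset.sum_sub_distrib, ← Finset.sum_smul, h1, h2, hs]
    rw [sub_sub_sub_cancel_right]
    refine Prod.ext ?_ ?_ <;> simp
  rw [key]
  refine sub_mem (Submodule.sum_mem _ fun i _ => Submodule.smul_mem _ _ ?_)
    (Submodule.sum_mem _ fun j _ => Submodule.smul_mem _ _ ?_)
  · exact phi_sub_mem_span E (hconn.preconnected _ v₀)
  · exact phi_sub_mem_span E (hconn.preconnected _ v₀)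

lemma span_le_range :
    Submodule.span ℝ (wvec '' E) ≤ LinearMap.range (Lmap E) := by
  rw [Submodule.span_le]
  rintro _ ⟨p, hp, rfl⟩
  refine ⟨fun e => if e = ⟨p, hp⟩ then 1 else 0, ?_⟩
  simp [Lmap, ite_smul, Finset.sum_ite_eq']

/-- The functional whose kernel is the compatibility subspace. -/
noncomputable def gmap : ((I → ℝ) × (J → ℝ)) →ₗ[ℝ] ℝ where
  toFun x := (∑ i, x.1 i) - ∑ j, x.2 j
  map_add' x y := by simp [Finset.sum_add_distrib]; ring
  map_smul' c x := by simp [Finset.mul_sum, mul_sub]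

lemma gmap_wvec (p : I × J) : gmap (wvec (I := I) (J := J) p) = 0 := by
  simp [gmap, wvec, Finset.sum_ite_eq]

lemma range_le_ker : LinearMap.range (Lmap E) ≤ LinearMap.ker gmap := by
  rintro _ ⟨f, rfl⟩
  simp only [LinearMap.mem_ker, Lmap, LinearMap.coe_mk, AddHom.coe_mk]
  rw [map_sum]
  simp [gmap_wvec]

lemma gmap_surj (v : I ⊕ J) : Function.Surjective (gmap (I := I) (J := J)) := by
  intro r
  cases v with
  | inl i₀ =>
    exact ⟨(fun i => if i = i₀ then r else 0, 0), by simp [gmap, Finset.sum_ite_eq']⟩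
  | inr j₀ =>
    exact ⟨(0, fun j => if j = j₀ then -r else 0), by simp [gmap, Finset.sum_ite_eq']⟩

lemma card_E (htree : (bipGraph E).IsTree) :
    Fintype.card ↥E + 1 = Fintype.card I + Fintype.card J := by
  classical
  haveI : Fintype (bipGraph E).edgeSet := (Set.toFinite _).fintype
  have hcard := htree.card_edgeFinset
  rw [SimpleGraph.edgeFinset_card] at hcard
  have hequiv : Fintype.card ↥E = Fintype.card (bipGraph E).edgeSet := by
    refine Fintype.card_congr (Equiv.ofBijective
      (fun e => ⟨s(Sum.inl (e : I × J).1, Sum.inr (e : I × J).2), ?_⟩) ⟨?_, ?_⟩)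
    · rw [SimpleGraph.mem_edgeSet, bipGraph, SimpleGraph.fromRel_adj]
      exact ⟨by simp, Or.inl ⟨e, e.2, rfl, rfl⟩⟩
    · rintro ⟨⟨a, b⟩, ha⟩ ⟨⟨c, d⟩, hc⟩ h
      simp only [Subtype.mk.injEq, Sym2.eq_iff] at h
      rcases h with ⟨h1, h2⟩ | ⟨h1, h2⟩
      · simp only [Sum.inl.injEq, Sum.inr.injEq] at h1 h2
        exact Subtype.ext (Prod.ext h1 h2)
      · exact absurd h1 (by simp)
    · rintro ⟨e, he⟩
      induction e with
      | _ u v =>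
        rw [SimpleGraph.mem_edgeSet, bipGraph, SimpleGraph.fromRel_adj] at he
        obtain ⟨hne, ⟨q, hq, rfl, rfl⟩ | ⟨q, hq, rfl, rfl⟩⟩ := he
        · exact ⟨⟨q, hq⟩, rfl⟩
        · exact ⟨⟨q, hq⟩, by simp [Sym2.eq_swap]⟩
  rw [← hequiv] at hcard
  rw [hcard, Fintype.card_sum]

lemma range_eq_ker (htree : (bipGraph E).IsTree) :
    LinearMap.range (Lmap E) = LinearMap.ker (gmap (I := I) (J := J)) := by
  refine le_antisymm (range_le_ker E) ?_
  intro x hx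
  have : ∑ i, x.1 i = ∑ j, x.2 j := by
    have := (LinearMap.mem_ker.mp hx)
    simpa [gmap, sub_eq_zero] using this
  exact span_le_range E (by simpa using mem_span_of E htree x.1 x.2 this)

lemma Lmap_injective (htree : (bipGraph E).IsTree) :
    Function.Injective (Lmap E) := by
  obtain ⟨v₀⟩ := htree.isConnected.nonempty
  rw [← LinearMap.ker_eq_bot]
  have hrn := (Lmap E).finrank_range_add_finrank_ker
  have hgn := (gmap (I := I) (J := J)).finrank_range_add_finrank_ker
  have hgr : LinearMap.range (gmap (I := I) (J := J)) = ⊤ :=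
    LinearMap.range_eq_top.2 (gmap_surj v₀)
  rw [hgr] at hgn
  have hdom : Module.finrank ℝ (↥E → ℝ) = Fintype.card ↥E := by
    simp [Module.finrank_pi]
  have hdom2 : Module.finrank ℝ ((I → ℝ) × (J → ℝ)) =
      Fintype.card I + Fintype.card J := by
    simp [Module.finrank_prod, Module.finrank_pi]
  rw [hdom2, finrank_top] at hgn
  have hcardE := card_E E htree
  rw [range_eq_ker E htree, hdom] at hrn
  -- from hgn : 1 + finrank ker gmap = cardI + cardJ  (note finrank ℝ ℝ = 1)
  have h1 : Module.finrank ℝ ℝ = 1 := Module.finrank_self ℝ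
  rw [h1] at hgn
  have hker0 : Module.finrank ℝ (LinearMap.ker (Lmap E)) = 0 := by omega
  have : FiniteDimensional ℝ (LinearMap.ker (Lmap E)) := inferInstance
  exact Submodule.finrank_eq_zero.mp hker0

lemma bridge (G : ↥E → ℝ) :
    ∑ p : I × J, (if h : p ∈ E then G ⟨p, h⟩ else 0) = ∑ e : ↥E, G e := by
  classical
  rw [Finset.sum_congr_set E (fun p => if h : p ∈ E then G ⟨p, h⟩ else 0) G
    (fun x h => by simp [h]) (fun x h => by simp [h])]
  congr!

lemma Lmap_fst (f : ↥E → ℝ) (i : I) :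
    (Lmap E f).1 i = ∑ j, (if h : (i, j) ∈ E then f ⟨(i, j), h⟩ else 0) := by
  have h1 : (Lmap E f).1 i = ∑ e : ↥E, (if (e : I × J).1 = i then f e else 0) := by
    simp only [Lmap, LinearMap.coe_mk, AddHom.coe_mk, Prod.fst_sum, Finset.sum_apply,
      Prod.smul_fst, Pi.smul_apply, wvec, smul_eq_mul, mul_ite, mul_one, mul_zero]
  rw [h1, ← bridge E (fun e => if (e : I × J).1 = i then f e else 0)]
  rw [Fintype.sum_prod_type]
  rw [Finset.sum_comm]
  refine Finset.sum_congr rfl fun j _ => ?_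
  have : ∀ i' : I, (if h : (i', j) ∈ E then (if i' = i then f ⟨(i', j), h⟩ else 0) else 0)
      = if i' = i then (if h : (i', j) ∈ E then f ⟨(i', j), h⟩ else 0) else 0 := by
    intro i'
    by_cases hm : (i', j) ∈ E <;> by_cases hi : i' = i <;> simp [hm, hi]
  simp only [this]
  rw [Finset.sum_ite_eq' Finset.univ i (fun i' => if h : (i', j) ∈ E then f ⟨(i', j), h⟩ else 0)]
  simp

lemma Lmap_snd (f : ↥E → ℝ) (j : J) :
    (Lmap E f).2 j = ∑ i, (if h : (i, j) ∈ E then f ⟨(i, j), h⟩ else 0) := by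
  have h1 : (Lmap E f).2 j = ∑ e : ↥E, (if (e : I × J).2 = j then f e else 0) := by
    simp only [Lmap, LinearMap.coe_mk, AddHom.coe_mk, Prod.snd_sum, Finset.sum_apply,
      Prod.smul_snd, Pi.smul_apply, wvec, smul_eq_mul, mul_ite, mul_one, mul_zero]
  rw [h1, ← bridge E (fun e => if (e : I × J).2 = j then f e else 0)]
  rw [Fintype.sum_prod_type]
  refine Finset.sum_congr rfl fun i _ => ?_
  have : ∀ j' : J, (if h : (i, j') ∈ E then (if j' = j then f ⟨(i, j'), h⟩ else 0) else 0)
      = if j' = j then (if h : (i, j') ∈ E then f ⟨(i, j'), h⟩ else 0) else 0 := by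
    intro j'
    by_cases hm : (i, j') ∈ E <;> by_cases hj : j' = j <;> simp [hm, hj]
  simp only [this]
  rw [Finset.sum_ite_eq' Finset.univ j (fun j' => if h : (i, j') ∈ E then f ⟨(i, j'), h⟩ else 0)]
  simp

end Aux

theorem stmt0 {I J : Type*} [Fintype I] [Fintype J]
    (E : Set (I × J)) (htree : (bipGraph E).IsTree) :
    ∀ (α : I → ℝ) (β : J → ℝ), (∑ i, α i) = (∑ j, β j) →
      ∃! ψ : I → J → ℝ,
        (∀ i, (∑ j, ψ i j) = α i) ∧
        (∀ j, (∑ i, ψ i j) = β j) ∧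
        (∀ i j, (i, j) ∉ E → ψ i j = 0) := by
  classical
  haveI : Fintype ↥E := (Set.toFinite E).fintype
  intro α β hsum
  have hmem : ((α, β) : (I → ℝ) × (J → ℝ)) ∈ LinearMap.range (Lmap E) :=
    span_le_range E (mem_span_of E htree α β hsum)
  obtain ⟨f, hf⟩ := hmem
  have hinj := Lmap_injective E htree
  refine ⟨fun i j => if h : (i, j) ∈ E then f ⟨(i, j), h⟩ else 0, ⟨?_, ?_, ?_⟩, ?_⟩
  · intro i
    rw [← Lmap_fst E f i, hf]
  · intro j
    rw [← Lmap_snd E f j, hf]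
  · intro i j h
    simp [h]
  · rintro ψ' ⟨h1, h2, h3⟩
    set f' : ↥E → ℝ := fun e => ψ' (e : I × J).1 (e : I × J).2 with hf'
    have hLf' : Lmap E f' = (α, β) := by
      refine Prod.ext ?_ ?_
      · funext i
        rw [Lmap_fst E f' i]
        have : ∀ j, (if h : (i, j) ∈ E then f' ⟨(i, j), h⟩ else 0) = ψ' i j := by
          intro j
          by_cases hm : (i, j) ∈ E
          · simp [hm, hf']
          · simp [hm, h3 i j hm]
        simp only [this]
        exact h1 i
      · funext j
        rw [Lmap_snd E f' j]
        have : ∀ i, (if h : (i, j) ∈ E then f' ⟨(i, j), h⟩ else 0) = ψ' i j := by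
          intro i
          by_cases hm : (i, j) ∈ E
          · simp [hm, hf']
          · simp [hm, h3 i j hm]
        simp only [this]
        exact h2 j
    have hff : f' = f := hinj (by rw [hLf', hf])
    funext i j
    by_cases hm : (i, j) ∈ E
    · simp only [hm, dif_pos]
      rw [← hff]
    · simp [hm, h3 i j hm]
end

section
/- Let G be a bipartite tree on I ∪ J with edge set E, and suppose î ∈ I is a leaf of G with unique neighbor j_î ∈ J. If ψ is the unique matrix with row sums α, column sums β, and support in E, then the matrix obtained from ψ by deleting row î is the unique matrix with support in E \ {(î, j_î)}, row sums (α_i)_{i≠î}, and column sums equal to β except with β_{j_î} replaced by β_{j_î} − α_î. -/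
open Finset

lemma sum_split {ι : Type*} [Fintype ι] [DecidableEq ι] (a : ι) (f : ι → ℝ) :
    (∑ i, f i) = f a + ∑ i : {i : ι // i ≠ a}, f i.1 := by
  have h1 : (∑ i : {i : ι // i ≠ a}, f i.1) = ∑ x ∈ Finset.univ.erase a, f x := by
    rw [Finset.sum_subtype (p := fun x => x ≠ a) (Finset.univ.erase a)
      (fun x => by simp [Finset.mem_erase]) f]
  rw [h1, Finset.add_sum_erase _ f (Finset.mem_univ a)]

theorem stmt2 {I J : Type*} [Fintype I] [Fintype J] [DecidableEq I] [DecidableEq J]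
    (E : Set (I × J)) (htree : (bipGraph E).IsTree)
    (α : I → ℝ) (β : J → ℝ) (hsum : (∑ i, α i) = (∑ j, β j))
    (ihat : I) (jhat : J)
    (hedge : (ihat, jhat) ∈ E) (hleaf : ∀ j, (ihat, j) ∈ E → j = jhat)
    (ψ : I → J → ℝ)
    (hψ : (∀ i, (∑ j, ψ i j) = α i) ∧
          (∀ j, (∑ i, ψ i j) = β j) ∧
          (∀ i j, (i, j) ∉ E → ψ i j = 0))
    (huniq : ∀ φ : I → J → ℝ,
      ((∀ i, (∑ j, φ i j) = α i) ∧
       (∀ j, (∑ i, φ i j) = β j) ∧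
       (∀ i j, (i, j) ∉ E → φ i j = 0)) → φ = ψ) :
    ((∀ i : {i : I // i ≠ ihat}, (∑ j, ψ i.1 j) = α i.1) ∧
     (∀ j, (∑ i : {i : I // i ≠ ihat}, ψ i.1 j)
        = (if j = jhat then β j - α ihat else β j)) ∧
     (∀ (i : {i : I // i ≠ ihat}) (j : J),
        (i.1, j) ∉ E \ {(ihat, jhat)} → ψ i.1 j = 0)) ∧
    (∀ φ : {i : I // i ≠ ihat} → J → ℝ,
      ((∀ i : {i : I // i ≠ ihat}, (∑ j, φ i j) = α i.1) ∧
       (∀ j, (∑ i : {i : I // i ≠ ihat}, φ i j)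
          = (if j = jhat then β j - α ihat else β j)) ∧
       (∀ (i : {i : I // i ≠ ihat}) (j : J),
          (i.1, j) ∉ E \ {(ihat, jhat)} → φ i j = 0)) →
      φ = fun i j => ψ i.1 j) := by
  obtain ⟨hrow, hcol, hsupp⟩ := hψ
  -- ψ ihat j = 0 for j ≠ jhat
  have hzero : ∀ j, j ≠ jhat → ψ ihat j = 0 := fun j hj =>
    hsupp ihat j (fun h => hj (hleaf j h))
  -- ψ ihat jhat = α ihat
  have hval : ψ ihat jhat = α ihat := by
    have := hrow ihat
    rwa [Finset.sum_eq_single jhat (fun j _ hj => hzero j hj)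
      (fun h => absurd (Finset.mem_univ jhat) h)] at this
  have hpsi_ihat : ∀ j, ψ ihat j = if j = jhat then α ihat else 0 := by
    intro j
    by_cases hj : j = jhat
    · simp [hj, hval]
    · simp [hj, hzero j hj]
  constructor
  · refine ⟨fun i => hrow i.1, fun j => ?_, fun i j hij => ?_⟩
    · have := sum_split ihat (fun i => ψ i j)
      rw [hcol j] at this
      have h2 : (∑ i : {i : I // i ≠ ihat}, ψ i.1 j) = β j - ψ ihat j := by
        linarith
      rw [h2, hpsi_ihat j]
      by_cases hj : j = jhat <;> simp [hj]
    · apply hsupp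
      intro hE
      exact hij ⟨hE, by simp [Prod.ext_iff]; intro h; exact absurd h i.2⟩
  · intro φ ⟨hr, hc, hs⟩
    set φ' : I → J → ℝ := fun i j =>
      if h : i = ihat then (if j = jhat then α ihat else 0) else φ ⟨i, h⟩ j with hφ'
    have key : φ' = ψ := by
      apply huniq
      refine ⟨fun i => ?_, fun j => ?_, fun i j hij => ?_⟩
      · by_cases h : i = ihat
        · subst h; simp [hφ']
        · simp only [hφ', dif_neg h]; exact hr ⟨i, h⟩
      · have := sum_split ihat (fun i => φ' i j)
        rw [this]
        have h1 : (∑ i : {i : I // i ≠ ihat}, φ' i.1 j)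
            = ∑ i : {i : I // i ≠ ihat}, φ i j := by
          apply Finset.sum_congr rfl
          intro i _
          simp [hφ', i.2]
        rw [h1, hc j]
        simp only [hφ', dif_pos rfl]
        by_cases hj : j = jhat <;> simp [hj]
      · by_cases h : i = ihat
        · subst h
          simp only [hφ', dif_pos rfl]
          have : j ≠ jhat := fun hj => hij (hj ▸ hedge)
          simp [this]
        · simp only [hφ', dif_neg h]
          apply hs ⟨i, h⟩
          intro ⟨hE, _⟩
          exact hij hE
    funext i j
    have : φ' i.1 j = ψ i.1 j := by rw [key]
    simpa [hφ', i.2] using this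
end

section
/- Let B₁ be a lower-triangular I × I real matrix with strictly positive diagonal entries. Then there exists a diagonal matrix Q with strictly positive diagonal entries and a constant c > 0 such that xᵀ(Q B₁ + B₁ᵀ Q) x ≥ c |x|² for all x ∈ ℝ^I. -/
open Matrix

private lemma amgm_aux (a b t : ℝ) (ht : 0 < t) :
    -(t * a ^ 2 + b ^ 2 / t) ≤ 2 * (a * b) := by
  have key : t * a ^ 2 + b ^ 2 / t + 2 * (a * b) = (t * a + b) ^ 2 / t := by
    field_simp
    ring
  have h2 : 0 ≤ (t * a + b) ^ 2 / t := by positivity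
  linarith

private lemma key_aux : ∀ (n : ℕ) (B : Matrix (Fin n) (Fin n) ℝ),
    (∀ i k : Fin n, i < k → B i k = 0) → (∀ i, 0 < B i i) →
    ∃ q : Fin n → ℝ, (∀ i, 0 < q i) ∧ ∃ c : ℝ, 0 < c ∧
      ∀ x : Fin n → ℝ,
        c * (∑ i, (x i) ^ 2) ≤ 2 * ∑ i, ∑ k, q i * B i k * (x i * x k) := by
  intro n
  induction n with
  | zero =>
    intro B _ _
    exact ⟨fun _ => 1, fun i => one_pos, 1, one_pos, fun x => by simp⟩
  | succ n ih =>
    intro B hlt hdiag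
    obtain ⟨q', hq', c', hc', hform⟩ := ih (fun i k => B i.castSucc k.castSucc)
      (fun i k h => hlt _ _ (by simpa using h)) (fun i => hdiag _)
    set L := Fin.last n with hL
    have hbpos : 0 < B L L := hdiag L
    set t : ℝ := B L L / (n + 1) with htdef
    have ht : 0 < t := by positivity
    set M : ℝ := 1 + ∑ k : Fin n, (B L k.castSucc) ^ 2 with hMdef
    have hM : 0 < M := by positivity
    set ε : ℝ := c' * t / (2 * M) with hεdef
    have hε : 0 < ε := by positivity
    refine ⟨Fin.snoc q' ε, ?_, min (c' / 2) (ε * B L L), ?_, ?_⟩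
    · intro i
      induction i using Fin.lastCases with
      | last => simpa [Fin.snoc_last] using hε
      | cast i => simpa [Fin.snoc_castSucc] using hq' i
    · exact lt_min (by linarith) (by positivity)
    · intro x
      have hsplit : (∑ i : Fin (n + 1), ∑ k : Fin (n + 1),
            (Fin.snoc q' ε : Fin (n+1) → ℝ) i * B i k * (x i * x k))
          = (∑ i : Fin n, ∑ k : Fin n,
              q' i * B i.castSucc k.castSucc * (x i.castSucc * x k.castSucc))
            + (ε * B L L * (x L) ^ 2
              + ∑ k : Fin n, ε * B L k.castSucc * (x L * x k.castSucc)) := by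
        rw [Fin.sum_univ_castSucc]
        congr 1
        · refine Finset.sum_congr rfl fun i _ => ?_
          rw [Fin.sum_univ_castSucc]
          rw [hlt i.castSucc (Fin.last n) (Fin.castSucc_lt_last i)]
          simp [Fin.snoc_castSucc]
        · rw [Fin.sum_univ_castSucc]
          simp only [Fin.snoc_last]
          ring
      -- cross term estimate
      have hcross : ∀ k : Fin n,
          -(ε * t * (x L) ^ 2 + ε / t * (B L k.castSucc) ^ 2 * (x k.castSucc) ^ 2)
            ≤ 2 * (ε * B L k.castSucc * (x L * x k.castSucc)) := by
        intro k
        have h := amgm_aux (x L) (ε * (B L k.castSucc * x k.castSucc)) (ε * t)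
          (by positivity)
        have e1 : (ε * (B L k.castSucc * x k.castSucc)) ^ 2 / (ε * t)
            = ε / t * (B L k.castSucc) ^ 2 * (x k.castSucc) ^ 2 := by
          field_simp
        rw [e1] at h
        calc -(ε * t * (x L) ^ 2 + ε / t * (B L k.castSucc) ^ 2 * (x k.castSucc) ^ 2)
            = -(ε * t * (x L) ^ 2 + ε / t * (B L k.castSucc) ^ 2 * (x k.castSucc) ^ 2) := rfl
          _ ≤ 2 * (x L * (ε * (B L k.castSucc * x k.castSucc))) := h
          _ = 2 * (ε * B L k.castSucc * (x L * x k.castSucc)) := by ring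
      have hC : -((n : ℝ) * (ε * t) * (x L) ^ 2
            + ∑ k : Fin n, ε / t * (B L k.castSucc) ^ 2 * (x k.castSucc) ^ 2)
          ≤ ∑ k : Fin n, 2 * (ε * B L k.castSucc * (x L * x k.castSucc)) := by
        have h := Finset.sum_le_sum (fun k (_ : k ∈ Finset.univ) => hcross k)
        have e2 : ∑ k : Fin n,
            -(ε * t * (x L) ^ 2 + ε / t * (B L k.castSucc) ^ 2 * (x k.castSucc) ^ 2)
            = -((n : ℝ) * (ε * t) * (x L) ^ 2
              + ∑ k : Fin n, ε / t * (B L k.castSucc) ^ 2 * (x k.castSucc) ^ 2) := by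
          rw [Finset.sum_neg_distrib, Finset.sum_add_distrib, Finset.sum_const,
            Finset.card_univ, Fintype.card_fin]
          push_cast
          ring
        rw [e2] at h
        exact h
      -- coefficient bound
      have hcoef : ∀ k : Fin n, ε / t * (B L k.castSucc) ^ 2 ≤ c' / 2 := by
        intro k
        have hBk : (B L k.castSucc) ^ 2 ≤ M := by
          have h1 : (B L k.castSucc) ^ 2 ≤ ∑ j : Fin n, (B L j.castSucc) ^ 2 :=
            Finset.single_le_sum (f := fun j : Fin n => (B L j.castSucc) ^ 2)
              (fun i _ => sq_nonneg _) (Finset.mem_univ k)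
          simp only [hMdef]
          linarith
        have het : ε / t = c' / (2 * M) := by
          rw [hεdef]
          field_simp
        rw [het, div_mul_eq_mul_div, div_le_div_iff₀ (by positivity) (by norm_num)]
        nlinarith
      have hsum2 : ∑ k : Fin n, ε / t * (B L k.castSucc) ^ 2 * (x k.castSucc) ^ 2
          ≤ c' / 2 * ∑ k : Fin n, (x k.castSucc) ^ 2 := by
        rw [Finset.mul_sum]
        exact Finset.sum_le_sum fun k _ =>
          mul_le_mul_of_nonneg_right (hcoef k) (sq_nonneg _)
      have hnt : (n : ℝ) * (ε * t) * (x L) ^ 2 ≤ ε * B L L * (x L) ^ 2 := by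
        have h1 : (n : ℝ) * t ≤ B L L := by
          rw [htdef, mul_div_assoc']
          rw [div_le_iff₀ (by positivity)]
          nlinarith [hbpos]
        nlinarith [mul_le_mul_of_nonneg_left h1 (mul_nonneg hε.le (sq_nonneg (x L)))]
      have hIH := hform (fun i => x i.castSucc)
      have hS : (0 : ℝ) ≤ ∑ k : Fin n, (x k.castSucc) ^ 2 :=
        Finset.sum_nonneg fun k _ => sq_nonneg _
      have hmin1 : min (c' / 2) (ε * B L L) * ∑ k : Fin n, (x k.castSucc) ^ 2
          ≤ c' / 2 * ∑ k : Fin n, (x k.castSucc) ^ 2 :=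
        mul_le_mul_of_nonneg_right (min_le_left _ _) hS
      have hmin2 : min (c' / 2) (ε * B L L) * (x L) ^ 2 ≤ ε * B L L * (x L) ^ 2 :=
        mul_le_mul_of_nonneg_right (min_le_right _ _) (sq_nonneg _)
      have hsq : (∑ i : Fin (n + 1), (x i) ^ 2)
          = (∑ k : Fin n, (x k.castSucc) ^ 2) + (x L) ^ 2 := by
        rw [Fin.sum_univ_castSucc]
      rw [hsplit, hsq]
      have hmulsum : (2 : ℝ) * ∑ k : Fin n, ε * B L k.castSucc * (x L * x k.castSucc)
          = ∑ k : Fin n, 2 * (ε * B L k.castSucc * (x L * x k.castSucc)) := by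
        rw [Finset.mul_sum]
      nlinarith [hC, hsum2, hnt, hIH, hmin1, hmin2, hmulsum]

/-- For a lower-triangular matrix `B₁` with positive diagonal entries there is a positive
diagonal matrix `Q` and `c > 0` with `xᵀ(QB₁ + B₁ᵀQ)x ≥ c |x|²` for all `x`. -/
theorem stmt6 {n : ℕ} (B : Matrix (Fin n) (Fin n) ℝ)
    (hlt : ∀ i k : Fin n, i < k → B i k = 0) (hdiag : ∀ i, 0 < B i i) :
    ∃ q : Fin n → ℝ, (∀ i, 0 < q i) ∧ ∃ c : ℝ, 0 < c ∧
      ∀ x : Fin n → ℝ,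
        c * (∑ i, (x i) ^ 2) ≤
          x ⬝ᵥ ((Matrix.diagonal q * B + B.transpose * Matrix.diagonal q).mulVec x) := by
  obtain ⟨q, hq, c, hc, hform⟩ := key_aux n B hlt hdiag
  refine ⟨q, hq, c, hc, fun x => ?_⟩
  have heq : x ⬝ᵥ ((Matrix.diagonal q * B + B.transpose * Matrix.diagonal q).mulVec x)
      = 2 * ∑ i, ∑ k, q i * B i k * (x i * x k) := by
    simp only [dotProduct, mulVec, Matrix.add_apply, Matrix.diagonal_mul,
      Matrix.mul_diagonal, Matrix.transpose_apply]
    have e1 : ∀ i : Fin n, x i * (∑ k, (q i * B i k + B k i * q k) * x k)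
        = ∑ k, (q i * B i k * (x i * x k) + q k * B k i * (x k * x i)) := by
      intro i
      rw [Finset.mul_sum]
      exact Finset.sum_congr rfl fun k _ => by ring
    calc ∑ i, x i * (∑ k, (q i * B i k + B k i * q k) * x k)
        = ∑ i, ∑ k, (q i * B i k * (x i * x k) + q k * B k i * (x k * x i)) :=
          Finset.sum_congr rfl fun i _ => e1 i
      _ = (∑ i, ∑ k, q i * B i k * (x i * x k))
          + ∑ i, ∑ k, q k * B k i * (x k * x i) := by
          rw [← Finset.sum_add_distrib]
          exact Finset.sum_congr rfl fun i _ => Finset.sum_add_distrib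
      _ = (∑ i, ∑ k, q i * B i k * (x i * x k))
          + ∑ k, ∑ i, q k * B k i * (x k * x i) := by rw [Finset.sum_comm]
      _ = 2 * ∑ i, ∑ k, q i * B i k * (x i * x k) := by ring
  rw [heq]
  exact hform x
end

section
/- Let B₁ be a lower-triangular I × I matrix with positive diagonal entries, Q a positive diagonal matrix with xᵀ(QB₁ + B₁ᵀQ)x ≥ 8|x|² for all x, and m ≥ 2. Define V(x) = (xᵀQx)^{m/2}. Then there exist constants C₁, C₂ > 0 such that for all x ∈ ℝ^I, ∇V(x) · (B₁ x) ≥ (m/2)(xᵀQx)^{m/2−1}(8|x|²) and hence ∇V(x)·(−B₁x + ℓ) ≤ C₁ − C₂ |x|^m for any fixed vector ℓ ∈ ℝ^I. -/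
open Matrix

set_option maxHeartbeats 1000000

/-- With `V(x) = (xᵀQx)^{m/2}`, `∇V(x) = m (xᵀQx)^{m/2−1} Q x`, coercivity of
`QB₁ + B₁ᵀQ` gives `∇V(x)·(B₁x) ≥ (m/2)(xᵀQx)^{m/2−1}·8|x|²`, and hence
`∇V(x)·(−B₁x + ℓ) ≤ C₁ − C₂|x|^m`. -/
theorem stmt7 {n : ℕ} (B : Matrix (Fin n) (Fin n) ℝ)
    (hlt : ∀ i k : Fin n, i < k → B i k = 0) (hdiag : ∀ i, 0 < B i i)
    (q : Fin n → ℝ) (hq : ∀ i, 0 < q i) (m : ℝ) (hm : 2 ≤ m)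
    (hcoer : ∀ x : Fin n → ℝ,
      8 * (∑ i, (x i) ^ 2) ≤
        x ⬝ᵥ ((Matrix.diagonal q * B + B.transpose * Matrix.diagonal q).mulVec x))
    (ℓ : Fin n → ℝ) :
    (∀ x : Fin n → ℝ,
      (m / 2) * (x ⬝ᵥ ((Matrix.diagonal q).mulVec x)) ^ (m / 2 - 1) * (8 * ∑ i, (x i) ^ 2)
        ≤ (fun i => m * (x ⬝ᵥ ((Matrix.diagonal q).mulVec x)) ^ (m / 2 - 1) *
              ((Matrix.diagonal q).mulVec x) i) ⬝ᵥ (B.mulVec x)) ∧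
    ∃ C₁ : ℝ, 0 < C₁ ∧ ∃ C₂ : ℝ, 0 < C₂ ∧
      ∀ x : Fin n → ℝ,
        (fun i => m * (x ⬝ᵥ ((Matrix.diagonal q).mulVec x)) ^ (m / 2 - 1) *
            ((Matrix.diagonal q).mulVec x) i) ⬝ᵥ (fun i => -(B.mulVec x) i + ℓ i)
          ≤ C₁ - C₂ * (Real.sqrt (∑ i, (x i) ^ 2)) ^ m := by
  have hm0 : (0:ℝ) < m := by linarith
  set e : ℝ := m / 2 - 1 with he
  have he0 : 0 ≤ e := by rw [he]; linarith
  have hsum : ∀ x : Fin n → ℝ,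
      x ⬝ᵥ (Matrix.diagonal q).mulVec x = ∑ i, q i * x i ^ 2 := by
    intro x
    simp only [dotProduct, Matrix.mulVec_diagonal]
    apply Finset.sum_congr rfl
    intro i _; ring
  have hs_nonneg : ∀ x : Fin n → ℝ, 0 ≤ x ⬝ᵥ (Matrix.diagonal q).mulVec x := by
    intro x
    rw [hsum]
    apply Finset.sum_nonneg
    intro i _
    have := (hq i).le
    positivity
  have hP : ∀ x : Fin n → ℝ,
      4 * (∑ i, x i ^ 2) ≤ ∑ i, (q i * x i) * (B.mulVec x) i := by
    intro x
    have h := hcoer x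
    have hexp : x ⬝ᵥ ((Matrix.diagonal q * B + B.transpose * Matrix.diagonal q).mulVec x)
        = 2 * ∑ i, (q i * x i) * (B.mulVec x) i := by
      rw [Matrix.add_mulVec, dotProduct_add, ← Matrix.mulVec_mulVec, ← Matrix.mulVec_mulVec,
          Matrix.dotProduct_mulVec x B.transpose, Matrix.vecMul_transpose]
      simp only [dotProduct, Matrix.mulVec_diagonal, Finset.mul_sum,
        ← Finset.sum_add_distrib]
      apply Finset.sum_congr rfl
      intro i _; ring
    rw [hexp] at h
    linarith
  constructor
  · intro x
    set s := x ⬝ᵥ (Matrix.diagonal q).mulVec x with hsdef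
    have ha : (0:ℝ) ≤ s ^ e := Real.rpow_nonneg (hs_nonneg x) e
    have hdp : (fun i => m * s ^ e * ((Matrix.diagonal q).mulVec x) i) ⬝ᵥ (B.mulVec x)
        = m * s ^ e * ∑ i, (q i * x i) * (B.mulVec x) i := by
      simp only [dotProduct, Matrix.mulVec_diagonal, Finset.mul_sum]
      apply Finset.sum_congr rfl
      intro i _; ring
    rw [hdp]
    have h4 := hP x
    have hma : (0:ℝ) ≤ m * s ^ e := mul_nonneg hm0.le ha
    calc m / 2 * s ^ e * (8 * ∑ i, x i ^ 2) = m * s ^ e * (4 * ∑ i, x i ^ 2) := by ring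
      _ ≤ m * s ^ e * ∑ i, (q i * x i) * (B.mulVec x) i :=
          mul_le_mul_of_nonneg_left h4 hma
  · rcases Nat.eq_zero_or_pos n with hn | hn
    · refine ⟨1, one_pos, 1, one_pos, fun x => ?_⟩
      subst hn
      simp [dotProduct, Real.zero_rpow hm0.ne']
    · have hne : (Finset.univ : Finset (Fin n)).Nonempty := ⟨⟨0, hn⟩, Finset.mem_univ _⟩
      set qmin := Finset.univ.inf' hne q with hqmin
      set qmax := Finset.univ.sup' hne q with hqmax
      have hqmin_pos : 0 < qmin := by
        rw [hqmin, Finset.lt_inf'_iff]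
        intro i _; exact hq i
      have hqmax_pos : 0 < qmax :=
        lt_of_lt_of_le (hq ⟨0, hn⟩) (Finset.le_sup' q (Finset.mem_univ _))
      have hqle : ∀ i, qmin ≤ q i := fun i => Finset.inf'_le q (Finset.mem_univ i)
      have hqge : ∀ i, q i ≤ qmax := fun i => Finset.le_sup' q (Finset.mem_univ i)
      set L := ∑ i, |ℓ i| with hL
      have hL0 : 0 ≤ L := Finset.sum_nonneg fun i _ => abs_nonneg _
      have hqminE : 0 < qmin ^ e := Real.rpow_pos_of_pos hqmin_pos e
      have hqmaxE : 0 < qmax ^ e := Real.rpow_pos_of_pos hqmax_pos e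
      set A := 4 * m * qmin ^ e with hA
      have hApos : 0 < A := by rw [hA]; positivity
      set K := m * qmax ^ (e + 1) * L with hK
      have hK0 : 0 ≤ K := by
        rw [hK]
        have := (Real.rpow_pos_of_pos hqmax_pos (e + 1)).le
        positivity
      set R := max 1 (2 * K / A) with hR
      have hR1 : (1:ℝ) ≤ R := le_max_left _ _
      have hR0 : (0:ℝ) < R := lt_of_lt_of_le one_pos hR1
      have hRm : 0 ≤ K * R ^ (m - 1) :=
        mul_nonneg hK0 (Real.rpow_nonneg hR0.le _)
      refine ⟨K * R ^ (m - 1) + 1, by linarith, A / 2, half_pos hApos, fun x => ?_⟩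
      set T := ∑ i, x i ^ 2 with hT
      have hT0 : 0 ≤ T := by rw [hT]; positivity
      set r := Real.sqrt T with hr
      have hr0 : 0 ≤ r := Real.sqrt_nonneg _
      by_cases hTz : T = 0
      · have hx0 : ∀ i, x i = 0 := by
          intro i
          have h1 : ∀ j ∈ Finset.univ, (0:ℝ) ≤ x j ^ 2 := fun j _ => sq_nonneg _
          have := (Finset.sum_eq_zero_iff_of_nonneg h1).mp hTz i (Finset.mem_univ i)
          exact (pow_eq_zero_iff two_ne_zero).mp this
        have hxz : x = 0 := funext hx0
        rw [hr, hTz, Real.sqrt_zero, Real.zero_rpow hm0.ne']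
        have hD : (fun i => m * (x ⬝ᵥ (Matrix.diagonal q).mulVec x) ^ e *
            ((Matrix.diagonal q).mulVec x) i) ⬝ᵥ (fun i => -(B.mulVec x) i + ℓ i) = 0 := by
          subst hxz
          simp [dotProduct, Matrix.mulVec_diagonal]
        rw [hD]
        linarith
      · have hTpos : 0 < T := lt_of_le_of_ne hT0 (Ne.symm hTz)
        have hrpos : 0 < r := Real.sqrt_pos.mpr hTpos
        set s := x ⬝ᵥ (Matrix.diagonal q).mulVec x with hsdef
        have hs0 : 0 ≤ s := hs_nonneg x
        have ha0 : 0 ≤ s ^ e := Real.rpow_nonneg hs0 e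
        have hma0 : 0 ≤ m * s ^ e := mul_nonneg hm0.le ha0
        -- rewrite dot product
        have hdp2 : (fun i => m * s ^ e * ((Matrix.diagonal q).mulVec x) i) ⬝ᵥ
              (fun i => -(B.mulVec x) i + ℓ i)
            = -(m * s ^ e * ∑ i, (q i * x i) * (B.mulVec x) i)
              + m * s ^ e * ∑ i, q i * x i * ℓ i := by
          simp only [dotProduct, Matrix.mulVec_diagonal, Finset.mul_sum, ← Finset.sum_neg_distrib,
            ← Finset.sum_add_distrib]
          apply Finset.sum_congr rfl
          intro i _; ring
        rw [hdp2]
        -- bounds on s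
        have hslb : qmin * T ≤ s := by
          rw [hsdef, hsum, hT, Finset.mul_sum]
          apply Finset.sum_le_sum
          intro i _
          exact mul_le_mul_of_nonneg_right (hqle i) (sq_nonneg _)
        have hsub : s ≤ qmax * T := by
          rw [hsdef, hsum, hT, Finset.mul_sum]
          apply Finset.sum_le_sum
          intro i _
          exact mul_le_mul_of_nonneg_right (hqge i) (sq_nonneg _)
        have halb : qmin ^ e * T ^ e ≤ s ^ e := by
          rw [← Real.mul_rpow hqmin_pos.le hT0]
          exact Real.rpow_le_rpow (by positivity) hslb he0
        have haub : s ^ e ≤ qmax ^ e * T ^ e := by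
          rw [← Real.mul_rpow hqmax_pos.le hT0]
          exact Real.rpow_le_rpow hs0 hsub he0
        -- bound on the ℓ term
        have hxi : ∀ i, |x i| ≤ r := by
          intro i
          rw [hr, ← Real.sqrt_sq_eq_abs]
          exact Real.sqrt_le_sqrt (Finset.single_le_sum (fun j _ => sq_nonneg (x j))
            (Finset.mem_univ i))
        have hGle : ∑ i, q i * x i * ℓ i ≤ qmax * L * r := by
          have h1 : ∀ i ∈ Finset.univ, q i * x i * ℓ i ≤ qmax * r * |ℓ i| := by
            intro i _
            have h2 : q i * x i * ℓ i ≤ q i * (|x i| * |ℓ i|) := by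
              rw [mul_assoc]
              apply mul_le_mul_of_nonneg_left _ (hq i).le
              calc x i * ℓ i ≤ |x i * ℓ i| := le_abs_self _
                _ = |x i| * |ℓ i| := abs_mul _ _
            have h3 : q i * (|x i| * |ℓ i|) ≤ qmax * (r * |ℓ i|) := by
              apply mul_le_mul (hqge i) _ (by positivity) hqmax_pos.le
              exact mul_le_mul_of_nonneg_right (hxi i) (abs_nonneg _)
            linarith [h2, h3, (by ring : qmax * (r * |ℓ i|) = qmax * r * |ℓ i|)]
          calc ∑ i, q i * x i * ℓ i ≤ ∑ i, qmax * r * |ℓ i| := Finset.sum_le_sum h1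
            _ = qmax * L * r := by rw [← Finset.mul_sum, hL]; ring
        -- rpow arithmetic
        have hrT : r = T ^ ((1:ℝ)/2) := by rw [hr, Real.sqrt_eq_rpow]
        have hrm : r ^ m = T ^ (m / 2) := by
          rw [hrT, ← Real.rpow_mul hT0]
          congr 1; ring
        have hTeT : T ^ e * T = T ^ (m / 2) := by
          nth_rewrite 2 [← Real.rpow_one T]
          rw [← Real.rpow_add hTpos]
          congr 1
          rw [he]; ring
        have hTer : T ^ e * r = T ^ ((m - 1) / 2) := by
          rw [hrT, ← Real.rpow_add hTpos]
          congr 1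
          rw [he]; ring
        have hrm1 : r ^ (m - 1) = T ^ ((m - 1) / 2) := by
          rw [hrT, ← Real.rpow_mul hT0]
          congr 1; ring
        -- main estimates
        have hPx := hP x
        rw [← hT] at hPx
        have step1 : m * s ^ e * (4 * T) ≤ m * s ^ e * ∑ i, (q i * x i) * (B.mulVec x) i :=
          mul_le_mul_of_nonneg_left hPx hma0
        have step2 : m * s ^ e * ∑ i, q i * x i * ℓ i ≤ m * s ^ e * (qmax * L * r) :=
          mul_le_mul_of_nonneg_left hGle hma0
        have step3 : A * T ^ (m / 2) ≤ m * s ^ e * (4 * T) := by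
          have h1 : m * (qmin ^ e * T ^ e) ≤ m * s ^ e :=
            mul_le_mul_of_nonneg_left halb hm0.le
          have h2 : m * (qmin ^ e * T ^ e) * (4 * T) ≤ m * s ^ e * (4 * T) :=
            mul_le_mul_of_nonneg_right h1 (by positivity)
          calc A * T ^ (m / 2) = m * (qmin ^ e * T ^ e) * (4 * T) := by
                rw [hA, ← hTeT]; ring
            _ ≤ m * s ^ e * (4 * T) := h2
        have step4 : m * s ^ e * (qmax * L * r) ≤ K * T ^ ((m - 1) / 2) := by
          have h1 : m * s ^ e ≤ m * (qmax ^ e * T ^ e) :=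
            mul_le_mul_of_nonneg_left haub hm0.le
          have h2 : m * s ^ e * (qmax * L * r) ≤ m * (qmax ^ e * T ^ e) * (qmax * L * r) :=
            mul_le_mul_of_nonneg_right h1
              (mul_nonneg (mul_nonneg hqmax_pos.le hL0) hr0)
          have h3 : qmax ^ (e + 1) = qmax ^ e * qmax := by
            rw [Real.rpow_add hqmax_pos, Real.rpow_one]
          calc m * s ^ e * (qmax * L * r) ≤ m * (qmax ^ e * T ^ e) * (qmax * L * r) := h2
            _ = K * T ^ ((m - 1) / 2) := by rw [hK, h3, ← hTer]; ring
        -- Young-type bound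
        have key : K * T ^ ((m - 1) / 2) ≤ K * R ^ (m - 1) + 1 + A / 2 * T ^ (m / 2) := by
          have hm1 : (0:ℝ) ≤ m - 1 := by linarith
          have hAT : 0 ≤ A / 2 * T ^ (m / 2) := by
            have := Real.rpow_nonneg hT0 (m / 2)
            positivity
          rcases le_or_gt r R with hrR | hRr
          · have : K * r ^ (m - 1) ≤ K * R ^ (m - 1) :=
              mul_le_mul_of_nonneg_left (Real.rpow_le_rpow hr0 hrR hm1) hK0
            rw [hrm1] at this
            linarith
          · have hKAr : K ≤ A / 2 * r := by
              have h1 : 2 * K / A ≤ r := le_of_lt (lt_of_le_of_lt (le_max_right _ _) hRr)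
              have h2 : A / 2 * (2 * K / A) = K := by field_simp
              have h3 := mul_le_mul_of_nonneg_left h1 (half_pos hApos).le
              rw [h2] at h3
              exact h3
            have h4 : K * r ^ (m - 1) ≤ A / 2 * r * r ^ (m - 1) :=
              mul_le_mul_of_nonneg_right hKAr (Real.rpow_nonneg hr0 _)
            have h5 : A / 2 * r * r ^ (m - 1) = A / 2 * r ^ m := by
              rw [mul_assoc]
              congr 1
              nth_rewrite 1 [← Real.rpow_one r]
              rw [← Real.rpow_add hrpos]
              congr 1; ring
            rw [h5] at h4
            rw [hrm1, hrm] at h4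
            linarith
        rw [hrm]
        linarith
end

section
/- Fix a bipartite tree on I ∪ J with linear solution map G, service rates μ_{ij} ≥ 0 (μ_{ij} > 0 iff (i,j) is an edge), abandonment rates γ_i ≥ 0, and offset ℓ ∈ ℝ^I. Define b_i(x,u) = −∑_{j : i∼j} μ_{ij} Ĝ_{ij}[u](x) − γ_i (e·x)⁺ u^c_i + ℓ_i. Then there exist, after a suitable permutation of the indices in I, a lower-triangular matrix B₁ ∈ ℝ^{I×I} with strictly positive diagonal entries and a matrix B₂ ∈ ℝ^{I×J}, such that b(x,u) = −B₁(x − (e·x)⁺ u^c) + (e·x)⁻ B₂ u^s − (e·x)⁺ Γ u^c + ℓ for all x ∈ ℝ^I and u ∈ U, where Γ = diag(γ₁,…,γ_I). -/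
open Finset Matrix

namespace Stmt18Aux

section Generic
variable {V : Type*} [DecidableEq V] {G : SimpleGraph V} {r : V}

/-- every vertex on a walk to r is within the walk's length of r -/
lemma dist_le_of_mem_support {u v : V} {p : G.Walk u r} (h : v ∈ p.support) :
    G.dist v r ≤ p.length :=
  le_trans (SimpleGraph.dist_le (p.dropUntil v h)) (SimpleGraph.Walk.length_dropUntil_le p h)

lemma parent_exists (hconn : G.Connected) {v : V} (hv : v ≠ r) :
    ∃ u, G.Adj v u ∧ G.dist u r + 1 = G.dist v r := by
  obtain ⟨p, hp⟩ := hconn.exists_walk_length_eq_dist v r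
  cases p with
  | nil => exact absurd rfl hv
  | cons h q =>
    rename_i u
    refine ⟨u, h, ?_⟩
    have h1 : G.dist u r ≤ q.length := SimpleGraph.dist_le q
    have h2 : G.dist v r ≤ G.dist v u + G.dist u r := hconn.dist_triangle
    have h3 : G.dist v u = 1 := SimpleGraph.dist_eq_one_iff_adj.mpr h
    rw [SimpleGraph.Walk.length_cons] at hp
    omega

lemma parent_unique (htree : G.IsTree) {v u₁ u₂ : V}
    (h₁ : G.Adj v u₁) (h₂ : G.Adj v u₂)
    (hd₁ : G.dist u₁ r + 1 = G.dist v r) (hd₂ : G.dist u₂ r + 1 = G.dist v r) :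
    u₁ = u₂ := by
  have hconn := htree.isConnected
  obtain ⟨q₁, hq₁p, hq₁l⟩ := hconn.exists_path_of_dist u₁ r
  obtain ⟨q₂, hq₂p, hq₂l⟩ := hconn.exists_path_of_dist u₂ r
  have hvs₁ : v ∉ q₁.support := by
    intro hmem
    have := dist_le_of_mem_support hmem
    omega
  have hvs₂ : v ∉ q₂.support := by
    intro hmem
    have := dist_le_of_mem_support hmem
    omega
  have hp₁ : (SimpleGraph.Walk.cons h₁ q₁).IsPath := hq₁p.cons hvs₁
  have hp₂ : (SimpleGraph.Walk.cons h₂ q₂).IsPath := hq₂p.cons hvs₂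
  obtain ⟨p, -, hu⟩ := htree.existsUnique_path v r
  have he : SimpleGraph.Walk.cons h₁ q₁ = SimpleGraph.Walk.cons h₂ q₂ :=
    (hu _ hp₁).trans (hu _ hp₂).symm
  have hs := congrArg SimpleGraph.Walk.support he
  rw [SimpleGraph.Walk.support_cons, SimpleGraph.Walk.support_cons,
    q₁.support_eq_cons, q₂.support_eq_cons] at hs
  injection hs with _ hs2
  injection hs2

lemma dist_lt_card [Fintype V] (hconn : G.Connected) (u : V) :
    G.dist u r < Fintype.card V := by
  obtain ⟨p, hp, hl⟩ := hconn.exists_path_of_dist u r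
  rw [← hl]
  exact hp.length_lt
end Generic

variable {nI nJ : ℕ} {E : Set (Fin nI × Fin nJ)}


variable {nI nJ : ℕ} {E : Set (Fin nI × Fin nJ)}

lemma adj_inl_inr {i : Fin nI} {j : Fin nJ} :
    (bipGraph E).Adj (Sum.inl i) (Sum.inr j) ↔ (i, j) ∈ E := by
  simp [bipGraph, SimpleGraph.fromRel_adj]

lemma not_adj_inl_inl {i i' : Fin nI} : ¬ (bipGraph E).Adj (Sum.inl i) (Sum.inl i') := by
  simp [bipGraph, SimpleGraph.fromRel_adj]

lemma not_adj_inr_inr {j j' : Fin nJ} : ¬ (bipGraph E).Adj (Sum.inr j) (Sum.inr j') := by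
  simp [bipGraph, SimpleGraph.fromRel_adj]

/-- parity function -/
def par : Fin nI ⊕ Fin nJ → ZMod 2 := Sum.elim (fun _ => 0) (fun _ => 1)

lemma adj_par {a b : Fin nI ⊕ Fin nJ} (h : (bipGraph E).Adj a b) : par b = par a + 1 := by
  rcases a with i | j <;> rcases b with i' | j'
  · exact absurd h not_adj_inl_inl
  · simp [par]
  · simp only [par, Sum.elim_inl, Sum.elim_inr]; decide
  · exact absurd h not_adj_inr_inr

lemma walk_par {a b : Fin nI ⊕ Fin nJ} (p : (bipGraph E).Walk a b) :
    (p.length : ZMod 2) = par a + par b := by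
  induction p with
  | nil =>
    rename_i u
    have h2 : (2 : ZMod 2) = 0 := rfl
    simp only [SimpleGraph.Walk.length_nil, Nat.cast_zero, ← two_mul]
    rw [h2, zero_mul]
  | cons h q ih =>
    rw [SimpleGraph.Walk.length_cons]
    push_cast
    rw [ih, adj_par h]
    have h2 : (2 : ZMod 2) = 0 := rfl
    ring_nf
    linear_combination h2


lemma dist_par (hconn : (bipGraph E).Connected) (a b : Fin nI ⊕ Fin nJ) :
    ((bipGraph E).dist a b : ZMod 2) = par a + par b := by
  obtain ⟨p, hp⟩ := hconn.exists_walk_length_eq_dist a b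
  rw [← hp]
  exact walk_par p

lemma adj_dist_ne (hconn : (bipGraph E).Connected) {a b r : Fin nI ⊕ Fin nJ}
    (h : (bipGraph E).Adj a b) : (bipGraph E).dist a r ≠ (bipGraph E).dist b r := by
  intro heq
  have h1 := dist_par hconn a r
  have h2 := dist_par hconn b r
  rw [heq, h2] at h1
  have hpar : par b = par a + 1 := by
    rcases a with i | j <;> rcases b with i' | j' <;>
      simp_all [bipGraph, SimpleGraph.fromRel_adj, par] <;> decide
  rw [hpar] at h1
  have h2' : (2 : ZMod 2) = 0 := rfl
  have : (0 : ZMod 2) = 1 := by linear_combination h1 - h2'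
  exact absurd this (by decide)

lemma adj_dist_cases (hconn : (bipGraph E).Connected) {a b r : Fin nI ⊕ Fin nJ}
    (h : (bipGraph E).Adj a b) :
    (bipGraph E).dist a r + 1 = (bipGraph E).dist b r ∨
    (bipGraph E).dist b r + 1 = (bipGraph E).dist a r := by
  have h1 : (bipGraph E).dist a r ≤ (bipGraph E).dist a b + (bipGraph E).dist b r :=
    hconn.dist_triangle
  have h2 : (bipGraph E).dist b r ≤ (bipGraph E).dist b a + (bipGraph E).dist a r :=
    hconn.dist_triangle
  have h3 : (bipGraph E).dist a b = 1 := SimpleGraph.dist_eq_one_iff_adj.mpr h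
  have h4 : (bipGraph E).dist b a = 1 := SimpleGraph.dist_eq_one_iff_adj.mpr h.symm
  have h5 := adj_dist_ne hconn (r := r) h
  omega


lemma unique_flow (htree : (bipGraph E).IsTree) (j₀ : Fin nJ)
    (M : Fin nI → Fin nJ → ℝ)
    (hsupp : ∀ i j, (i, j) ∉ E → M i j = 0)
    (hrow : ∀ i, ∑ j, M i j = 0) (hcol : ∀ j, ∑ i, M i j = 0) :
    ∀ i j, M i j = 0 := by
  have hconn := htree.isConnected
  set r : Fin nI ⊕ Fin nJ := Sum.inr j₀ with hr
  -- main claim by strong induction on N - level of edge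
  have key : ∀ k : ℕ, ∀ i j, (i, j) ∈ E →
      max ((bipGraph E).dist (Sum.inl i) r) ((bipGraph E).dist (Sum.inr j) r) + k = Fintype.card (Fin nI ⊕ Fin nJ) → M i j = 0 := by
    intro k
    induction k using Nat.strong_induction_on with
    | _ k IH =>
      intro i j hij hlev
      have hadj : (bipGraph E).Adj (Sum.inl i) (Sum.inr j) := adj_inl_inr.mpr hij
      rcases adj_dist_cases hconn (r := r) hadj with hc | hc
      · -- child is inr j : use column sum
        have hz : ∀ i' ∈ Finset.univ, i' ≠ i → M i' j = 0 := by
          intro i' _ hne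
          by_cases hij' : (i', j) ∈ E
          · have hadj' : (bipGraph E).Adj (Sum.inl i') (Sum.inr j) := adj_inl_inr.mpr hij'
            rcases adj_dist_cases hconn (r := r) hadj' with hc' | hc'
            · -- i' is also a parent of inr j : contradiction
              exact absurd (Sum.inl.inj
                (parent_unique htree hadj'.symm hadj.symm hc' hc)) hne
            · -- inl i' is a child of inr j : use IH at level +1
              have hlt : (bipGraph E).dist (Sum.inr j) r < Fintype.card (Fin nI ⊕ Fin nJ) := dist_lt_card hconn _
              have hlt2 : (bipGraph E).dist (Sum.inl i') r < Fintype.card (Fin nI ⊕ Fin nJ) := dist_lt_card hconn _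
              refine IH (k - 1) (by omega) i' j hij' ?_
              omega
          · exact hsupp i' j hij'
        have := hcol j
        rw [Finset.sum_eq_single_of_mem i (Finset.mem_univ i) hz] at this
        exact this
      · -- child is inl i : use row sum
        have hz : ∀ j' ∈ Finset.univ, j' ≠ j → M i j' = 0 := by
          intro j' _ hne
          by_cases hij' : (i, j') ∈ E
          · have hadj' : (bipGraph E).Adj (Sum.inl i) (Sum.inr j') := adj_inl_inr.mpr hij'
            rcases adj_dist_cases hconn (r := r) hadj' with hc' | hc'
            · -- inr j' is a child of inl i : IH
              have hlt : (bipGraph E).dist (Sum.inl i) r < Fintype.card (Fin nI ⊕ Fin nJ) := dist_lt_card hconn _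
              have hlt2 : (bipGraph E).dist (Sum.inr j') r < Fintype.card (Fin nI ⊕ Fin nJ) := dist_lt_card hconn _
              refine IH (k - 1) (by omega) i j' hij' ?_
              omega
            · exact absurd (Sum.inr.inj
                (parent_unique htree hadj' hadj hc' hc)) hne
          · exact hsupp i j' hij'
        have := hrow i
        rw [Finset.sum_eq_single_of_mem j (Finset.mem_univ j) hz] at this
        exact this
  intro i j
  by_cases hij : (i, j) ∈ E
  · have hle : max ((bipGraph E).dist (Sum.inl i) r) ((bipGraph E).dist (Sum.inr j) r) ≤ Fintype.card (Fin nI ⊕ Fin nJ) := by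
      have := dist_lt_card (r := r) hconn (Sum.inl i)
      have := dist_lt_card (r := r) hconn (Sum.inr j)
      omega
    exact key (Fintype.card (Fin nI ⊕ Fin nJ) - max ((bipGraph E).dist (Sum.inl i) r) ((bipGraph E).dist (Sum.inr j) r)) i j hij (by omega)
  · exact hsupp i j hij

lemma exists_flow (htree : (bipGraph E).IsTree) (j₀ : Fin nJ) :
    ∀ (n : ℕ) (k : Fin nI), (bipGraph E).dist (Sum.inl k) (Sum.inr j₀) = n →
    ∃ P : Fin nI → Fin nJ → ℝ,
      (∀ i j, (i, j) ∉ E → P i j = 0) ∧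
      (∀ i, ∑ j, P i j = (Pi.single k (1:ℝ) : Fin nI → ℝ) i) ∧
      (∀ j, ∑ i, P i j = (Pi.single j₀ (1:ℝ) : Fin nJ → ℝ) j) ∧
      (∃ jk, (k, jk) ∈ E ∧ P k = (Pi.single jk (1:ℝ) : Fin nJ → ℝ)) ∧
      (∀ i j, i ≠ k → P i j ≠ 0 →
        (bipGraph E).dist (Sum.inl i) (Sum.inr j₀) < n) := by
  have hconn := htree.isConnected
  intro n
  induction n using Nat.strong_induction_on with
  | _ n IH =>
    intro k hk
    obtain ⟨u, hadj, hdu⟩ := parent_exists hconn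
      (v := Sum.inl k) (r := Sum.inr j₀) (by simp)
    obtain i'' | j := u
    · exact absurd hadj not_adj_inl_inl
    have hkj : (k, j) ∈ E := adj_inl_inr.mp hadj
    by_cases hdj : (bipGraph E).dist (Sum.inr j) (Sum.inr j₀) = 0
    · -- base case: j = j₀
      have hj : j = j₀ := by
        have := (hconn.dist_eq_zero_iff (u := Sum.inr j) (v := Sum.inr j₀)).mp hdj
        exact Sum.inr.inj this
      subst hj
      refine ⟨fun a b => if a = k ∧ b = j then 1 else 0, ?_, ?_, ?_, ?_, ?_⟩
      · intro a b hnot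
        have e1 : ¬(a = k ∧ b = j) := by rintro ⟨rfl, rfl⟩; exact hnot hkj
        simp [e1]
      · intro a
        by_cases hak : a = k <;> simp [hak, Pi.single_apply]
      · intro b
        by_cases hbj : b = j <;> simp [hbj, Pi.single_apply]
      · refine ⟨j, hkj, ?_⟩
        funext b
        simp [Pi.single_apply]
      · intro a b hak hne
        exact absurd (by simp [hak]) hne
    · -- inductive step
      have hjne : (Sum.inr j : Fin nI ⊕ Fin nJ) ≠ Sum.inr j₀ := by
        intro h; rw [h] at hdj; exact hdj (SimpleGraph.dist_self)
      obtain ⟨u', hadj', hdu'⟩ := parent_exists hconn hjne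
      obtain i' | j'' := u'
      swap
      · exact absurd hadj' not_adj_inr_inr
      have hi'j : (i', j) ∈ E := adj_inl_inr.mp hadj'.symm
      have hdist_i' : (bipGraph E).dist (Sum.inl i') (Sum.inr j₀) + 2 = n := by omega
      have hlt : (bipGraph E).dist (Sum.inl i') (Sum.inr j₀) < n := by omega
      obtain ⟨P', hsupp', hrow', hcol', ⟨jk', hjk', hrowk'⟩, he'⟩ :=
        IH _ hlt i' rfl
      have hki' : k ≠ i' := by
        intro h
        rw [h] at hk
        omega
      have hP'k : ∀ b, P' k b = 0 := by
        intro b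
        by_contra h
        have := he' k b hki' h
        omega
      refine ⟨fun a b => P' a b + (if a = k ∧ b = j then 1 else 0)
          - (if a = i' ∧ b = j then 1 else 0), ?_, ?_, ?_, ?_, ?_⟩
      · intro a b hnot
        have e1 : ¬(a = k ∧ b = j) := by rintro ⟨rfl, rfl⟩; exact hnot hkj
        have e2 : ¬(a = i' ∧ b = j) := by rintro ⟨rfl, rfl⟩; exact hnot hi'j
        simp [hsupp' a b hnot, e1, e2]
      · intro a
        rw [Finset.sum_sub_distrib, Finset.sum_add_distrib, hrow' a]
        have t1 : ∑ b, (if a = k ∧ b = j then (1:ℝ) else 0) = if a = k then 1 else 0 := by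
          by_cases h : a = k <;> simp [h]
        have t2 : ∑ b, (if a = i' ∧ b = j then (1:ℝ) else 0) = if a = i' then 1 else 0 := by
          by_cases h : a = i' <;> simp [h]
        rw [t1, t2]
        simp only [Pi.single_apply]
        by_cases h1 : a = k
        · simp [h1, hki'.symm]
        · by_cases h2 : a = i' <;> simp [h1, h2]
      · intro b
        rw [Finset.sum_sub_distrib, Finset.sum_add_distrib, hcol' b]
        have t1 : ∑ a, (if a = k ∧ b = j then (1:ℝ) else 0) = if b = j then 1 else 0 := by
          by_cases h : b = j <;> simp [h]
        have t2 : ∑ a, (if a = i' ∧ b = j then (1:ℝ) else 0) = if b = j then 1 else 0 := by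
          by_cases h : b = j <;> simp [h]
        rw [t1, t2]
        ring
      · refine ⟨j, hkj, ?_⟩
        funext b
        have e2 : ¬(k = i' ∧ b = j) := fun h => hki' h.1
        simp [hP'k b, e2, Pi.single_apply]
      · intro a b hak hne
        by_cases hai : a = i'
        · rw [hai]; omega
        · have e1 : ¬(a = k ∧ b = j) := fun h => hak h.1
          have e2 : ¬(a = i' ∧ b = j) := fun h => hai h.1
          simp only [if_neg e1, if_neg e2] at hne
          have : P' a b ≠ 0 := by
            intro h
            rw [h] at hne
            simp at hne
          have := he' a b hai this
          omega

lemma key_swap {n m : ℕ} (w : Fin m → ℝ) (c : Fin n → ℝ) (g : Fin n → Fin m → ℝ) :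
    ∑ j, w j * ∑ k, c k * g k j = ∑ k, (∑ j, w j * g k j) * c k := by
  simp only [Finset.mul_sum]
  rw [Finset.sum_comm]
  refine Finset.sum_congr rfl fun k _ => ?_
  rw [Finset.sum_mul]
  exact Finset.sum_congr rfl fun j _ => by ring

lemma neg_swap {n : ℕ} (c b : Fin n → ℝ) (sm : ℝ) :
    ∑ j, (-b j) * (sm * c j) = -(sm * ∑ j, b j * c j) := by
  rw [Finset.mul_sum, ← Finset.sum_neg_distrib]
  exact Finset.sum_congr rfl fun j _ => by ring

lemma mulVec_apply' {m n : ℕ} (M : Matrix (Fin m) (Fin n) ℝ) (v : Fin n → ℝ) (i : Fin m) :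
    (M *ᵥ v) i = ∑ j, M i j * v j := rfl


end Stmt18Aux

open Stmt18Aux in
set_option maxHeartbeats 1000000 in
/-- Drift representation for a multiclass multi-pool tree network: with
`bᵢ(x,u) = −∑ⱼ μᵢⱼ Ĝᵢⱼ[u](x) − γᵢ (e·x)⁺ uᶜᵢ + ℓᵢ`, after a suitable permutation of the
classes there are a lower-triangular matrix `B₁` with positive diagonal and a matrix `B₂`
with `b(x,u) = −B₁(x − (e·x)⁺uᶜ) + (e·x)⁻ B₂ uˢ − (e·x)⁺ Γ uᶜ + ℓ`. -/
theorem stmt18 {nI nJ : ℕ}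
    (E : Set (Fin nI × Fin nJ)) (htree : (bipGraph E).IsTree)
    (G : ((Fin nI → ℝ) × (Fin nJ → ℝ)) →ₗ[ℝ] (Fin nI → Fin nJ → ℝ))
    (hG : ∀ (α : Fin nI → ℝ) (β : Fin nJ → ℝ), (∑ i, α i) = (∑ j, β j) →
      (∀ i, (∑ j, G (α, β) i j) = α i) ∧
      (∀ j, (∑ i, G (α, β) i j) = β j) ∧
      (∀ i j, (i, j) ∉ E → G (α, β) i j = 0))
    (μ : Fin nI → Fin nJ → ℝ) (hμnn : ∀ i j, 0 ≤ μ i j)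
    (hμ : ∀ i j, 0 < μ i j ↔ (i, j) ∈ E)
    (γ : Fin nI → ℝ) (hγ : ∀ i, 0 ≤ γ i) (ℓ : Fin nI → ℝ) :
    ∃ (σ : Equiv.Perm (Fin nI)) (B₁ : Matrix (Fin nI) (Fin nI) ℝ)
      (B₂ : Matrix (Fin nI) (Fin nJ) ℝ),
      (∀ i k : Fin nI, σ i < σ k → B₁ i k = 0) ∧
      (∀ i, 0 < B₁ i i) ∧
      ∀ (x uc : Fin nI → ℝ) (us : Fin nJ → ℝ),
        (∀ i, 0 ≤ uc i) → (∀ j, 0 ≤ us j) →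
        (∑ i, uc i) = 1 → (∑ j, us j) = 1 →
        ∀ i,
          -(∑ j, μ i j *
              G (x - (max (∑ i', x i') 0) • uc, (-(max (-(∑ i', x i')) 0)) • us) i j)
            - γ i * (max (∑ i', x i') 0) * uc i + ℓ i
          = -(B₁.mulVec (x - (max (∑ i', x i') 0) • uc)) i
            + (max (-(∑ i', x i')) 0) * (B₂.mulVec us) i
            - (max (∑ i', x i') 0) * γ i * uc i + ℓ i := by
  classical
  rcases Nat.eq_zero_or_pos nJ with hnJ | hnJ
  · refine ⟨1, 1, 0, ?_, ?_, ?_⟩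
    · intro i k h
      exact Matrix.one_apply_ne (fun he => by subst he; exact lt_irrefl _ h)
    · intro i; simp [Matrix.one_apply]
    · intro x uc us _ _ _ hus
      exfalso
      subst hnJ
      simp at hus
  have j₀ : Fin nJ := ⟨0, hnJ⟩
  have hconn := htree.isConnected
  set d : Fin nI → ℕ := fun i => (bipGraph E).dist (Sum.inl i) (Sum.inr j₀) with hd
  have hsum1I : ∀ k : Fin nI, ∑ i, (Pi.single k (1:ℝ) : Fin nI → ℝ) i = 1 := by
    intro k; simp [Pi.single_apply]
  have hsum1J : ∀ j : Fin nJ, ∑ j', (Pi.single j (1:ℝ) : Fin nJ → ℝ) j' = 1 := by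
    intro j; simp [Pi.single_apply]
  -- structure of the basic flows
  have hflow : ∀ k : Fin nI, ∃ jk, (k, jk) ∈ E ∧
      (G (Pi.single k (1:ℝ), Pi.single j₀ (1:ℝ)) k = (Pi.single jk (1:ℝ) : Fin nJ → ℝ)) ∧
      (∀ i j, i ≠ k → G (Pi.single k (1:ℝ), Pi.single j₀ (1:ℝ)) i j ≠ 0 → d i < d k) := by
    intro k
    obtain ⟨P, hsupp, hrow, hcol, ⟨jk, hjk, hPk⟩, he⟩ := exists_flow htree j₀ (d k) k rfl
    obtain ⟨hGrow, hGcol, hGsupp⟩ :=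
      hG (Pi.single k (1:ℝ)) (Pi.single j₀ (1:ℝ)) (by rw [hsum1I, hsum1J])
    have hMeq : ∀ i j, G (Pi.single k (1:ℝ), Pi.single j₀ (1:ℝ)) i j = P i j := by
      have h0 := unique_flow htree j₀
        (fun i j => G (Pi.single k (1:ℝ), Pi.single j₀ (1:ℝ)) i j - P i j)
        (fun i j hij => by simp [hGsupp i j hij, hsupp i j hij])
        (fun i => by rw [Finset.sum_sub_distrib, hGrow i, hrow i, sub_self])
        (fun j => by rw [Finset.sum_sub_distrib, hGcol j, hcol j, sub_self])
      intro i j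
      have := h0 i j
      simp only [sub_eq_zero] at this
      exact this
    refine ⟨jk, hjk, funext fun b => (hMeq k b).trans (congrFun hPk b), ?_⟩
    intro i j hik hne
    rw [hMeq] at hne
    exact he i j hik hne
  choose jk hjkE hgk hgord using hflow
  -- the matrices
  set B₁ : Matrix (Fin nI) (Fin nI) ℝ :=
    Matrix.of (fun i k => ∑ j, μ i j * G (Pi.single k (1:ℝ), Pi.single j₀ (1:ℝ)) i j)
    with hB₁
  set B₂ : Matrix (Fin nI) (Fin nJ) ℝ :=
    Matrix.of (fun i j => ∑ j', μ i j' *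
      G (0, Pi.single j (1:ℝ) - Pi.single j₀ (1:ℝ)) i j') with hB₂
  -- the permutation
  set f : Fin nI → ℤ := fun i => -(d i : ℤ) with hf
  set σ : Equiv.Perm (Fin nI) := (Tuple.sort f)⁻¹ with hσ
  have hσmono : ∀ i k : Fin nI, f k < f i → σ k < σ i := by
    intro i k hlt
    by_contra hle
    push_neg at hle
    have := Tuple.monotone_sort f hle
    simp only [Function.comp_apply, hσ] at this
    rw [show (Tuple.sort f) ((Tuple.sort f)⁻¹ i) = i from Equiv.apply_symm_apply _ i,
      show (Tuple.sort f) ((Tuple.sort f)⁻¹ k) = k from Equiv.apply_symm_apply _ k] at this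
    omega
  refine ⟨σ, B₁, B₂, ?_, ?_, ?_⟩
  · -- triangularity
    intro i k hlt
    by_contra hne
    have hik : i ≠ k := by rintro rfl; exact lt_irrefl _ hlt
    rw [hB₁] at hne
    simp only [Matrix.of_apply] at hne
    obtain ⟨j, -, hj⟩ := Finset.exists_ne_zero_of_sum_ne_zero hne
    have hg : G (Pi.single k (1:ℝ), Pi.single j₀ (1:ℝ)) i j ≠ 0 := fun h => hj (by rw [h, mul_zero])
    have hdlt : d i < d k := hgord k i j hik hg
    have : σ k < σ i := hσmono i k (by simp [hf]; exact_mod_cast hdlt)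
    omega
  · -- positive diagonal
    intro k
    have : B₁ k k = μ k (jk k) := by
      rw [hB₁]
      simp only [Matrix.of_apply]
      rw [show G (Pi.single k (1:ℝ), Pi.single j₀ (1:ℝ)) k = _ from hgk k]
      simp [Pi.single_apply, mul_ite]
    rw [this]
    exact (hμ k (jk k)).mpr (hjkE k)
  · -- the identity
    intro x uc us huc hus hsc hss i
    set s := ∑ i', x i' with hs
    set sp := max s 0 with hsp
    set sm := max (-s) 0 with hsm
    set α : Fin nI → ℝ := x - sp • uc with hα
    have hsum_α : ∑ i', α i' = -sm := by
      have h1 : ∑ i', α i' = s - sp * (∑ i', uc i') := by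
        rw [hα]
        simp only [Pi.sub_apply, Pi.smul_apply, smul_eq_mul]
        rw [Finset.sum_sub_distrib, ← Finset.mul_sum, ← hs]
      rw [h1, hsc, mul_one, hsp, hsm]
      have := max_zero_sub_max_neg_zero_eq_self s
      linarith
    -- decomposition of the argument pair
    have hpair : ((α, (-sm) • us) : (Fin nI → ℝ) × (Fin nJ → ℝ)) =
        (∑ k, α k • ((Pi.single k (1:ℝ) : Fin nI → ℝ), (Pi.single j₀ (1:ℝ) : Fin nJ → ℝ)))
        + ∑ j, (sm * us j) •
            (((0 : Fin nI → ℝ), (Pi.single j₀ (1:ℝ) - Pi.single j (1:ℝ) : Fin nJ → ℝ))) := by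
      refine Prod.ext ?_ ?_
      · simp only [Prod.fst_add, Prod.fst_sum, Prod.smul_fst, smul_zero, Finset.sum_const_zero,
          add_zero]
        funext b
        rw [Finset.sum_apply]
        simp [Pi.single_apply, mul_ite]
      · simp only [Prod.snd_add, Prod.snd_sum, Prod.smul_snd]
        funext b
        rw [Pi.add_apply, Finset.sum_apply, Finset.sum_apply]
        simp only [Pi.smul_apply, Pi.sub_apply, smul_eq_mul]
        rw [← Finset.sum_mul, hsum_α]
        have e2 : ∑ j, sm * us j * ((Pi.single j₀ (1:ℝ) : Fin nJ → ℝ) b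
            - (Pi.single j (1:ℝ) : Fin nJ → ℝ) b)
            = sm * (Pi.single j₀ (1:ℝ) : Fin nJ → ℝ) b - sm * us b := by
          simp only [mul_sub]
          rw [Finset.sum_sub_distrib]
          congr 1
          · rw [← Finset.sum_mul, ← Finset.mul_sum, hss, mul_one]
          · simp [Pi.single_apply, mul_ite]
        rw [e2]
        ring
    -- apply G
    have hGdecomp : G (α, (-sm) • us) =
        (∑ k, α k • G (Pi.single k (1:ℝ), Pi.single j₀ (1:ℝ)))
        + ∑ j, (sm * us j) • G ((0 : Fin nI → ℝ), Pi.single j₀ (1:ℝ) - Pi.single j (1:ℝ)) := by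
      rw [hpair, map_add, map_sum, map_sum]
      simp only [_root_.map_smul]
    have hneg : ∀ jj : Fin nJ, G ((0 : Fin nI → ℝ), Pi.single j₀ (1:ℝ) - Pi.single jj (1:ℝ))
        = - G ((0 : Fin nI → ℝ), Pi.single jj (1:ℝ) - Pi.single j₀ (1:ℝ)) := by
      intro jj
      rw [← map_neg]
      congr 1
      refine Prod.ext ?_ ?_ <;> simp [neg_sub]
    have hBneg : ∀ j' : Fin nJ, ∑ j, μ i j *
        G ((0 : Fin nI → ℝ), Pi.single j₀ (1:ℝ) - Pi.single j' (1:ℝ)) i j = - B₂ i j' := by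
      intro j'
      rw [hneg j']
      simp only [hB₂, Matrix.of_apply, Pi.neg_apply, mul_neg, Finset.sum_neg_distrib]
    have hmv1 : (B₁.mulVec α) i
        = ∑ k, (∑ j, μ i j * G (Pi.single k (1:ℝ), Pi.single j₀ (1:ℝ)) i j) * α k := by
      rw [mulVec_apply']
      simp only [hB₁, Matrix.of_apply]
    have hmv2 : (B₂.mulVec us) i = ∑ j', B₂ i j' * us j' := mulVec_apply' _ _ _
    have hkey : ∑ j, μ i j * G (α, (-sm) • us) i j
        = B₁.mulVec α i - sm * (B₂.mulVec us) i := by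
      rw [hGdecomp]
      simp only [Pi.add_apply, Finset.sum_apply, Pi.smul_apply, smul_eq_mul, mul_add,
        Finset.sum_add_distrib]
      have h1 : ∑ j, μ i j * ∑ k, α k * G (Pi.single k (1:ℝ), Pi.single j₀ (1:ℝ)) i j
          = ∑ k, (∑ j, μ i j * G (Pi.single k (1:ℝ), Pi.single j₀ (1:ℝ)) i j) * α k := by
        simp only [Finset.mul_sum]
        rw [Finset.sum_comm]
        refine Finset.sum_congr rfl fun k _ => ?_
        rw [Finset.sum_mul]
        exact Finset.sum_congr rfl fun j _ => by ring
      have h2 : ∑ j, μ i j * ∑ j', (sm * us j') *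
            G ((0 : Fin nI → ℝ), Pi.single j₀ (1:ℝ) - Pi.single j' (1:ℝ)) i j
          = ∑ j', (∑ j, μ i j *
            G ((0 : Fin nI → ℝ), Pi.single j₀ (1:ℝ) - Pi.single j' (1:ℝ)) i j)
              * (sm * us j') := by
        simp only [Finset.mul_sum]
        rw [Finset.sum_comm]
        refine Finset.sum_congr rfl fun k _ => ?_
        rw [Finset.sum_mul]
        exact Finset.sum_congr rfl fun j _ => by ring
      rw [h1, h2, hmv1]
      have e3 : ∑ j', (∑ j, μ i j *
            G ((0 : Fin nI → ℝ), Pi.single j₀ (1:ℝ) - Pi.single j' (1:ℝ)) i j)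
              * (sm * us j')
          = -(sm * ∑ j', B₂ i j' * us j') := by
        rw [Finset.mul_sum, ← Finset.sum_neg_distrib]
        refine Finset.sum_congr rfl fun j' _ => ?_
        rw [hBneg j']
        ring
      rw [e3, hmv2]
      ring
    rw [hkey]
    ring
end
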